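/- arXiv:1903.03160 — 6 statements merged into one kernel-verified Lean document; each statement's English description precedes it below -/
import Mathlib

section
/- Let q be a prime power, n ≥ 1, r a divisor of q^n − 1, u ∈ F_q, and χ a multiplicative character of F_{q^n} of order d, extended by χ(0) = 0 (also for the trivial character). Set A = Σ_{ξ ∈ F_{q^n}} χ(ξ) ψ̃(u ξ^r), where ψ̃ is the lift to F_{q^n} of the canonical additive character of F_q, i.e., ψ̃(ξ) = ψ₀(Tr(ξ)). Then: (1) if d = 1 and u = 0, A = q^n − 1; (2) if d = 1 and u ≠ 0, |A| ≤ (r − 1) q^{n/2} + 1; (3) if d ≠ 1 and u = 0, A = 0; (4) if d ≠ 1 and u ≠ 0, |A| ≤ r q^{n/2}. -/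
/-- The canonical additive character of a finite field `K` of characteristic `p`:
`ψ₀(x) = exp(2πi · Tr₀(x)/p)` where `Tr₀` is the absolute trace down to the prime field. -/
noncomputable def canonAddChar (p : ℕ) (K : Type*) [Field K] [Fintype K] [CharP K p]
    [Algebra (ZMod p) K] (x : K) : ℂ :=
  Complex.exp (2 * Real.pi * Complex.I * ((Algebra.trace (ZMod p) K x).val : ℂ) / (p : ℂ))

/-!
Write `ψ = ψ₀ ∘ Tr` and `v` for `u` viewed in `E`. Expanding `ψ (v ξ ^ r)` by Gauss-sum inversion,
`(q ^ n - 1) ψ t = ∑ λ, λ⁻¹ t G(λ, ψ)` for `t ≠ 0`, and summing over `ξ` by orthogonality of the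
characters `χ λ⁻ʳ` gives `A = ∑_{λ ^ r = χ} λ⁻¹ v G(λ, ψ)`. Through `MulChar E ℂ ≃* Eˣ` the
characters with `λ ^ r = χ` become `r`-th roots of one element of `E`, so there are at most `r` of
them. Finally `|G(λ, ψ)| = √(q ^ n)` for `λ ≠ 1`, while `G(1, ψ) = -1` and `λ = 1` occurs only for
`χ = 1`. For `u = 0` the sum is just `∑ ξ, χ ξ`, which is `q ^ n - 1` or `0`.
-/

open Finset

lemma AddChar.compAddMonoidHom_trace_ne_one {K L M : Type*} [Field K] [Field L] [Algebra K L]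
    [FiniteDimensional K L] [Algebra.IsSeparable K L] [Monoid M] {ψ : AddChar K M} (hψ : ψ ≠ 1) :
    ψ.compAddMonoidHom (Algebra.trace K L).toAddMonoidHom ≠ 1 := by
  obtain ⟨a, ha⟩ := AddChar.ne_one_iff.mp hψ
  obtain ⟨x, rfl⟩ := Algebra.trace_surjective K L a
  exact AddChar.ne_one_iff.mpr ⟨x, ha⟩

noncomputable def canonAddCharHom (p : ℕ) [NeZero p] (K : Type*) [Field K] [Algebra (ZMod p) K] :
    AddChar K ℂ :=
  ZMod.stdAddChar.compAddMonoidHom (Algebra.trace (ZMod p) K).toAddMonoidHom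

lemma canonAddCharHom_apply (p : ℕ) [NeZero p] (K : Type*) [Field K] [Fintype K] [CharP K p]
    [Algebra (ZMod p) K] (x : K) : canonAddCharHom p K x = canonAddChar p K x := by
  rw [canonAddCharHom, AddChar.compAddMonoidHom_apply, ZMod.stdAddChar_apply, ZMod.toCircle_apply]
  rfl

lemma canonAddCharHom_ne_one (p : ℕ) [Fact p.Prime] (K : Type*) [Field K] [Finite K]
    [Algebra (ZMod p) K] : canonAddCharHom p K ≠ 1 := by
  refine AddChar.compAddMonoidHom_trace_ne_one fun h ↦ one_ne_zero (α := ZMod p) ?_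
  exact ZMod.injective_stdAddChar (by rw [h, AddChar.one_apply, AddChar.map_zero_eq_one])

namespace MulChar

noncomputable instance {M : Type*} [CommMonoid M] [Finite M] : Fintype (MulChar M ℂ) := .ofFinite _

lemma norm_apply_of_isUnit {R : Type*} [CommRing R] [Finite Rˣ] (χ : MulChar R ℂ) {a : R}
    (ha : IsUnit a) : ‖χ a‖ = 1 := by
  have := Fintype.ofFinite Rˣ
  simpa using Complex.norm_eq_one_of_mem_rootsOfUnity (χ.apply_mem_rootsOfUnity ha.unit)

open Classical in
lemma sum_eq_ite {R R' : Type*} [CommMonoid R] [Fintype R] [DecidableEq R] [CommRing R']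
    [IsDomain R'] (χ : MulChar R R') :
    ∑ a, χ a = if χ = 1 then (Fintype.card Rˣ : R') else 0 := by
  split_ifs with h
  · rw [h, sum_one_eq_card_units]
  · exact sum_eq_zero_of_ne_one h

variable {M : Type*} [CommMonoid M] [Fintype M]

lemma sum_characters_eq_zero {a : M} (ha : a ≠ 1) : ∑ χ : MulChar M ℂ, χ a = 0 := by
  obtain ⟨χ, hχ⟩ := exists_apply_ne_one_of_hasEnoughRootsOfUnity M ℂ ha
  refine eq_zero_of_mul_eq_self_left hχ ?_
  simp only [Finset.mul_sum, ← MulChar.mul_apply]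
  exact Fintype.sum_bijective _ (Group.mulLeft_bijective χ) _ _ fun χ' ↦ rfl

lemma sum_characters_eq [DecidableEq M] (a : M) :
    ∑ χ : MulChar M ℂ, χ a = if a = 1 then (Fintype.card Mˣ : ℂ) else 0 := by
  split_ifs with ha
  · simp only [ha, map_one, sum_const, card_univ, nsmul_eq_mul, mul_one, ← Nat.card_eq_fintype_card,
      card_eq_card_units_of_hasEnoughRootsOfUnity]
  · exact sum_characters_eq_zero ha

lemma sum_char_inv_mul_char_eq {G : Type*} [CommGroupWithZero G] [Fintype G] [DecidableEq G]
    {a : G} (ha : a ≠ 0) (b : G) :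
    ∑ χ : MulChar G ℂ, χ⁻¹ a * χ b = if a = b then (Fintype.card Gˣ : ℂ) else 0 := by
  simp only [inv_apply', ← map_mul, sum_characters_eq, inv_mul_eq_one₀ ha]

end MulChar

section FiniteField

variable {E : Type*} [Field E] [Fintype E]

lemma sum_inv_apply_mul_gaussSum [DecidableEq E] {t : E} (ht : t ≠ 0) (ψ : AddChar E ℂ) :
    ∑ φ : MulChar E ℂ, φ⁻¹ t * gaussSum φ ψ = Fintype.card Eˣ * ψ t := by
  simp only [gaussSum, mul_sum, ← mul_assoc]
  rw [sum_comm]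
  simp only [← sum_mul, MulChar.sum_char_inv_mul_char_eq ht, ite_mul, zero_mul, sum_ite_eq,
    mem_univ, if_true]

lemma norm_gaussSum {χ : MulChar E ℂ} (hχ : χ ≠ 1) {ψ : AddChar E ℂ} (hψ : ψ.IsPrimitive) :
    ‖gaussSum χ ψ‖ = √(Fintype.card E) := by
  have h := gaussSum_mul_gaussSum_eq_card hχ hψ
  rw [← star_gaussSum_eq, RCLike.star_def, RCLike.mul_conj] at h
  rw [← Real.sqrt_sq (norm_nonneg _)]
  exact congrArg Real.sqrt (Complex.ofReal_injective (by push_cast; exact h))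

lemma norm_gaussSum_le (χ : MulChar E ℂ) {ψ : AddChar E ℂ} (hψ : ψ ≠ 1) :
    ‖gaussSum χ ψ‖ ≤ √(Fintype.card E) := by
  rcases eq_or_ne χ 1 with rfl | hχ
  · rw [gaussSum_one_left hψ, norm_neg, norm_one, Real.one_le_sqrt]
    exact_mod_cast Fintype.card_pos
  · exact (norm_gaussSum hχ (AddChar.IsPrimitive.of_ne_one hψ)).le

lemma card_filter_pow_eq_le (χ : MulChar E ℂ) {r : ℕ} (hr : r ≠ 0) :
    #{φ : MulChar E ℂ | φ ^ r = χ} ≤ r := by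
  classical
  obtain ⟨e⟩ := MulChar.mulEquiv_units E ℂ
  calc #{φ : MulChar E ℂ | φ ^ r = χ}
      ≤ (Polynomial.nthRoots r ((e χ : Eˣ) : E)).toFinset.card := by
        refine card_le_card_of_injOn (fun φ ↦ ((e φ : Eˣ) : E)) (fun φ hφ ↦ ?_)
          fun _ _ _ _ h ↦ e.injective (Units.ext h)
        rw [mem_coe, mem_filter] at hφ
        rw [mem_coe, Multiset.mem_toFinset, Polynomial.mem_nthRoots (Nat.pos_of_ne_zero hr),
          ← Units.val_pow_eq_pow_val, ← map_pow, hφ.2]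
    _ ≤ r := (Multiset.toFinset_card_le _).trans (Polynomial.card_nthRoots r _)

noncomputable def hybridSum (χ : MulChar E ℂ) (ψ : AddChar E ℂ) (v : E) (r : ℕ) : ℂ :=
  ∑ ξ, χ ξ * ψ (v * ξ ^ r)

lemma hybridSum_zero [DecidableEq E] (χ : MulChar E ℂ) (ψ : AddChar E ℂ) (r : ℕ) :
    hybridSum χ ψ 0 r = if χ = 1 then (Fintype.card Eˣ : ℂ) else 0 := by
  simp only [hybridSum, zero_mul, AddChar.map_zero_eq_one, mul_one, MulChar.sum_eq_ite]

variable {χ : MulChar E ℂ} {ψ : AddChar E ℂ} {v : E} {r : ℕ}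

lemma hybridSum_eq_sum_gaussSum (hr : r ≠ 0) (hv : v ≠ 0) :
    hybridSum χ ψ v r = ∑ φ ∈ {φ : MulChar E ℂ | φ ^ r = χ}, φ⁻¹ v * gaussSum φ ψ := by
  classical
  have pointwise (ξ : E) : Fintype.card Eˣ * (χ ξ * ψ (v * ξ ^ r)) =
      ∑ φ : MulChar E ℂ, φ⁻¹ v * gaussSum φ ψ * (χ * (φ ^ r)⁻¹) ξ := by
    rcases eq_or_ne ξ 0 with rfl | hξ
    · simp only [MulChar.map_zero, zero_mul, mul_zero, sum_const_zero]
    rw [mul_left_comm, ← sum_inv_apply_mul_gaussSum (mul_ne_zero hv (pow_ne_zero r hξ)), mul_sum]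
    refine sum_congr rfl fun φ _ ↦ ?_
    rw [MulChar.mul_apply, ← inv_pow, MulChar.pow_apply' _ hr, map_mul, map_pow]
    ring
  refine mul_left_cancel₀ (Nat.cast_ne_zero.mpr Fintype.card_ne_zero : (Fintype.card Eˣ : ℂ) ≠ 0) ?_
  calc Fintype.card Eˣ * hybridSum χ ψ v r
      = ∑ ξ, ∑ φ : MulChar E ℂ, φ⁻¹ v * gaussSum φ ψ * (χ * (φ ^ r)⁻¹) ξ := by
        rw [hybridSum, mul_sum]
        exact sum_congr rfl fun ξ _ ↦ pointwise ξ
    _ = ∑ φ : MulChar E ℂ, φ⁻¹ v * gaussSum φ ψ * ∑ ξ, (χ * (φ ^ r)⁻¹) ξ := by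
        rw [sum_comm]
        simp only [mul_sum]
    _ = ∑ φ : MulChar E ℂ,
          if φ ^ r = χ then Fintype.card Eˣ * (φ⁻¹ v * gaussSum φ ψ) else 0 := by
        refine sum_congr rfl fun φ _ ↦ ?_
        simp only [MulChar.sum_eq_ite, mul_inv_eq_one, eq_comm (a := χ)]
        split_ifs <;> ring
    _ = Fintype.card Eˣ * ∑ φ ∈ {φ : MulChar E ℂ | φ ^ r = χ}, φ⁻¹ v * gaussSum φ ψ := by
        simp only [sum_filter, mul_sum, mul_ite, mul_zero]

lemma norm_hybridSum_le_sum_norm_gaussSum (hr : r ≠ 0) (hv : v ≠ 0) :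
    ‖hybridSum χ ψ v r‖ ≤ ∑ φ ∈ {φ : MulChar E ℂ | φ ^ r = χ}, ‖gaussSum φ ψ‖ := by
  rw [hybridSum_eq_sum_gaussSum hr hv]
  refine (norm_sum_le _ _).trans_eq (sum_congr rfl fun φ _ ↦ ?_)
  rw [norm_mul, φ⁻¹.norm_apply_of_isUnit hv.isUnit, one_mul]

lemma norm_hybridSum_le (hψ : ψ ≠ 1) (hr : r ≠ 0) (hv : v ≠ 0) :
    ‖hybridSum χ ψ v r‖ ≤ r * √(Fintype.card E) :=
  calc ‖hybridSum χ ψ v r‖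
      ≤ ∑ φ ∈ {φ : MulChar E ℂ | φ ^ r = χ}, ‖gaussSum φ ψ‖ :=
        norm_hybridSum_le_sum_norm_gaussSum hr hv
    _ ≤ #{φ : MulChar E ℂ | φ ^ r = χ} • √(Fintype.card E) :=
        sum_le_card_nsmul _ _ _ fun φ _ ↦ norm_gaussSum_le φ hψ
    _ ≤ r * √(Fintype.card E) := by
        rw [nsmul_eq_mul]
        gcongr
        exact_mod_cast card_filter_pow_eq_le χ hr

lemma norm_hybridSum_one_le (hψ : ψ ≠ 1) (hr : r ≠ 0) (hv : v ≠ 0) :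
    ‖hybridSum 1 ψ v r‖ ≤ (r - 1) * √(Fintype.card E) + 1 := by
  set S : Finset (MulChar E ℂ) := {φ | φ ^ r = 1}
  have one_mem : 1 ∈ S := by simp [S]
  have hS : (#(S.erase 1) : ℝ) ≤ r - 1 := by
    rw [card_erase_of_mem one_mem, Nat.cast_sub (card_pos.mpr ⟨1, one_mem⟩), Nat.cast_one]
    gcongr
    exact_mod_cast card_filter_pow_eq_le 1 hr
  calc ‖hybridSum 1 ψ v r‖
      ≤ ∑ φ ∈ S, ‖gaussSum φ ψ‖ := norm_hybridSum_le_sum_norm_gaussSum hr hv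
    _ = ∑ φ ∈ S.erase 1, ‖gaussSum φ ψ‖ + ‖gaussSum 1 ψ‖ := (sum_erase_add _ _ one_mem).symm
    _ ≤ #(S.erase 1) • √(Fintype.card E) + 1 := by
        refine add_le_add (sum_le_card_nsmul _ _ _ fun φ hφ ↦ ?_) ?_
        · exact (norm_gaussSum (ne_of_mem_erase hφ) (AddChar.IsPrimitive.of_ne_one hψ)).le
        · rw [gaussSum_one_left hψ, norm_neg, norm_one]
    _ ≤ (r - 1) * √(Fintype.card E) + 1 := by
        rw [nsmul_eq_mul]
        gcongr

end FiniteField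

theorem hybrid_character_sum_bounds_general (p q n : ℕ)
    (F E : Type*) [Field F] [Fintype F] [CharP F p] [Algebra (ZMod p) F]
    [Field E] [Fintype E] [Algebra F E]
    (hE : Fintype.card E = q ^ n)
    (r : ℕ) (hr : r ∣ q ^ n - 1) (u : F)
    (χ : MulChar E ℂ) (d : ℕ) (hd : orderOf χ = d)
    (A : ℂ)
    (hA : A = ∑ ξ : E, χ ξ * canonAddChar p F (Algebra.trace F E (algebraMap F E u * ξ ^ r))) :
    (d = 1 → u = 0 → A = (q : ℂ) ^ n - 1) ∧
    (d = 1 → u ≠ 0 → ‖A‖ ≤ ((r : ℝ) - 1) * Real.sqrt (q ^ n) + 1) ∧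
    (d ≠ 1 → u = 0 → A = 0) ∧
    (d ≠ 1 → u ≠ 0 → ‖A‖ ≤ (r : ℝ) * Real.sqrt (q ^ n)) := by
  classical
  have : Fact p.Prime := ⟨CharP.char_is_prime F p⟩
  set ψ := (canonAddCharHom p F).compAddMonoidHom (Algebra.trace F E).toAddMonoidHom
  have hψ : ψ ≠ 1 := AddChar.compAddMonoidHom_trace_ne_one (canonAddCharHom_ne_one p F)
  have hA' : A = hybridSum χ ψ (algebraMap F E u) r := by
    simp only [hA, hybridSum, ψ, AddChar.compAddMonoidHom_apply, canonAddCharHom_apply]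
    rfl
  have hr₀ : r ≠ 0 := by
    rintro rfl
    have := Fintype.one_lt_card (α := E)
    omega
  have hχ : χ = 1 ↔ d = 1 := by rw [← hd, orderOf_eq_one_iff]
  have hcard : √(Fintype.card E) = √(q ^ n) := by rw [hE]; push_cast; rfl
  have hv : u ≠ 0 → algebraMap F E u ≠ 0 := (map_ne_zero _).mpr
  refine ⟨fun hd₁ hu ↦ ?_, fun hd₁ hu ↦ ?_, fun hd₁ hu ↦ ?_, fun _ hu ↦ ?_⟩
  · rw [hA', hu, map_zero, hybridSum_zero, if_pos (hχ.mpr hd₁), Fintype.card_units, hE,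
      Nat.cast_sub (Nat.one_le_iff_ne_zero.mpr (hE ▸ Fintype.card_ne_zero)), Nat.cast_pow,
      Nat.cast_one]
  · rw [hA', ← hcard, hχ.mpr hd₁]
    exact norm_hybridSum_one_le hψ hr₀ (hv hu)
  · rw [hA', hu, map_zero, hybridSum_zero, if_neg (mt hχ.mp hd₁)]
  · rw [hA', ← hcard]
    exact norm_hybridSum_le hψ hr₀ (hv hu)

/-- Hybrid character-sum bounds: with `χ` a multiplicative character of
`F_{q^n}` of order `d` (with `χ(0) = 0`), `r ∣ q^n - 1`, `u ∈ F_q`, and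
`A = Σ_{ξ ∈ F_{q^n}} χ(ξ) ψ̃(u ξ^r)` where `ψ̃ = ψ₀ ∘ Tr` is the lift of the canonical
additive character `ψ₀` of `F_q`: (1) if `d = 1, u = 0` then `A = q^n - 1`;
(2) if `d = 1, u ≠ 0` then `|A| ≤ (r-1)q^{n/2} + 1`; (3) if `d ≠ 1, u = 0` then `A = 0`;
(4) if `d ≠ 1, u ≠ 0` then `|A| ≤ r q^{n/2}`. -/
theorem hybrid_character_sum_bounds (p a q n : ℕ) [Fact p.Prime] (ha : 0 < a) (hq : q = p ^ a)
    (hn : 1 ≤ n)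
    (F E : Type*) [Field F] [Fintype F] [CharP F p] [Algebra (ZMod p) F]
    [Field E] [Fintype E] [Algebra F E]
    (hF : Fintype.card F = q) (hE : Fintype.card E = q ^ n)
    (r : ℕ) (hr : r ∣ q ^ n - 1) (u : F)
    (χ : MulChar E ℂ) (d : ℕ) (hd : orderOf χ = d)
    (A : ℂ)
    (hA : A = ∑ ξ : E, χ ξ * canonAddChar p F (Algebra.trace F E (algebraMap F E u * ξ ^ r))) :
    (d = 1 → u = 0 → A = (q : ℂ) ^ n - 1) ∧
    (d = 1 → u ≠ 0 → ‖A‖ ≤ ((r : ℝ) - 1) * Real.sqrt (q ^ n) + 1) ∧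
    (d ≠ 1 → u = 0 → A = 0) ∧
    (d ≠ 1 → u ≠ 0 → ‖A‖ ≤ (r : ℝ) * Real.sqrt (q ^ n)) :=
  hybrid_character_sum_bounds_general p q n F E hE r hr u χ d hd A hA
end

section
/- Let q be a prime power and θ ∈ F_{q²} with θ ∉ F_q (so F_{q²} = F_q(θ)), and let χ be a nontrivial multiplicative character of F_{q²}. Set B = Σ_{α ∈ F_q} χ(θ + α). If the order of χ does not divide q + 1, then |B| = √q; if the order of χ divides q + 1, then B = −1. -/
/-!
Put `S = ∑_{y ∈ F} χ(y)`. Summing `χ` over `E = {u + vθ : u, v ∈ F}` row by row, the row `v = 0`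
gives `S` and each row `v ≠ 0` gives `χ(v) B`; since `∑_E χ = 0`, this yields `S (1 + B) = 0`.
As `x ↦ x^(q+1)` is the norm `E^× → F^×`, which is onto, `ord χ ∣ q + 1` exactly when `χ` is
trivial on `F^×`. In that case `S = q - 1 ≠ 0`, so `B = -1`. Otherwise `S = 0`, and
`|B|² = ∑_{α, β} χ((θ + α) / (θ + β))`: the diagonal contributes `q`, while the quotients with
`α ≠ β` run exactly once over `E \ F`, where `χ` sums to `0 - S = 0`.
-/

open Finset

namespace MulChar

variable {K L R : Type*} [Field K] [Field L] [CommMonoidWithZero R]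

noncomputable def ringHomComap (χ : MulChar L R) (f : K →+* L) : MulChar K R where
  toFun x := χ (f x)
  map_one' := by simp
  map_mul' x y := by simp
  map_nonunit' x hx := χ.map_nonunit (by simp_all)

@[simp]
theorem ringHomComap_apply (χ : MulChar L R) (f : K →+* L) (x : K) :
    χ.ringHomComap f x = χ (f x) :=
  rfl

theorem orderOf_dvd_iff_ringHomComap_eq_one [Algebra K L] [Finite L] (χ : MulChar L R) :
    orderOf χ ∣ (Nat.card L - 1) / (Nat.card K - 1) ↔
      χ.ringHomComap (algebraMap K L) = 1 := by
  have hnorm (a : Lˣ) : χ a ^ ((Nat.card L - 1) / (Nat.card K - 1)) =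
      χ (algebraMap K L (Units.map (Algebra.norm K) a : Kˣ)) := by
    rw [Units.coe_map, FiniteField.algebraMap_norm_eq_pow, map_pow]
  rw [orderOf_dvd_iff_pow_eq_one, eq_one_iff, eq_one_iff]
  simp_rw [pow_apply_coe, hnorm, ringHomComap_apply]
  exact ((FiniteField.unitsMap_norm_surjective K L).forall
    (p := fun y : Kˣ => χ (algebraMap K L y) = 1)).symm

end MulChar

section QuadraticExtension

variable {F E R : Type*} [Field F] [Field E] [Algebra F E] {θ : E}

theorem eq_and_eq_of_algebraMap_add_algebraMap_mul_eq (hθ : θ ∉ Set.range (algebraMap F E))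
    {a b c d : F}
    (h : algebraMap F E a + algebraMap F E b * θ = algebraMap F E c + algebraMap F E d * θ) :
    a = c ∧ b = d := by
  obtain rfl | hbd := eq_or_ne b d
  · exact ⟨(algebraMap F E).injective (add_right_cancel h), rfl⟩
  · refine absurd ⟨(a - c) / (d - b), ?_⟩ hθ
    rw [map_div₀, div_eq_iff (by simpa [sub_eq_zero] using hbd.symm), map_sub, map_sub]
    linear_combination h

theorem add_algebraMap_ne_zero (hθ : θ ∉ Set.range (algebraMap F E)) (α : F) :
    θ + algebraMap F E α ≠ 0 := fun h =>
  hθ ⟨-α, by rw [map_neg]; linear_combination -h⟩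

theorem sum_algebraMap_add_algebraMap_mul_eq [Fintype F] [CommRing R] (χ : MulChar E R) {v : F}
    (hv : v ≠ 0) :
    ∑ u : F, χ (algebraMap F E u + algebraMap F E v * θ) =
      χ (algebraMap F E v) * ∑ α : F, χ (θ + algebraMap F E α) := by
  rw [mul_sum, ← Equiv.sum_comp (Equiv.mulLeft₀ v hv)]
  refine sum_congr rfl fun α _ => ?_
  rw [← map_mul]
  congr 1
  simp only [Equiv.mulLeft₀_apply, map_mul]
  ring

variable [Fintype F]

/-- `(θ + α)(θ + δ) = (θ + γ)(θ + β)` gives `α + δ = γ + β` and `αδ = γβ` on comparing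
coefficients of `θ` and `1`, so `{α, δ} = {γ, β}`. -/
theorem injOn_div_offDiag (hθ : θ ∉ Set.range (algebraMap F E)) :
    Set.InjOn (fun p : F × F => (θ + algebraMap F E p.1) / (θ + algebraMap F E p.2))
      (univ : Finset F).offDiag := by
  have hne := add_algebraMap_ne_zero hθ
  rintro ⟨α, β⟩ hαβ ⟨γ, δ⟩ hγδ h
  simp only [coe_offDiag, Set.mem_offDiag, coe_univ, Set.mem_univ, true_and] at hαβ hγδ h
  rw [div_eq_div_iff (hne β) (hne δ)] at h
  obtain ⟨hprod, hsum⟩ := eq_and_eq_of_algebraMap_add_algebraMap_mul_eq (a := α * δ)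
    (b := α + δ) (c := γ * β) (d := γ + β) hθ
    (by simp only [map_mul, map_add]; linear_combination h)
  obtain rfl : α = γ := by
    have : (α - γ) * (α - β) = 0 := by linear_combination α * hsum - hprod
    exact sub_eq_zero.mp ((mul_eq_zero.mp this).resolve_right (sub_ne_zero.mpr hαβ))
  exact Prod.ext rfl (add_left_cancel hsum).symm

variable [Fintype E]

theorem bijective_algebraMap_add_algebraMap_mul (hθ : θ ∉ Set.range (algebraMap F E))
    (hE : Fintype.card E = Fintype.card F ^ 2) :
    Function.Bijective (fun p : F × F => algebraMap F E p.1 + algebraMap F E p.2 * θ) := by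
  refine (Fintype.bijective_iff_injective_and_card _).mpr ⟨fun p p' h => ?_, ?_⟩
  · obtain ⟨h₁, h₂⟩ := eq_and_eq_of_algebraMap_add_algebraMap_mul_eq hθ h
    exact Prod.ext h₁ h₂
  · rw [Fintype.card_prod, hE, sq]

/-- Both sides have `q² - q` elements. -/
theorem image_offDiag_div_eq_compl_range [DecidableEq E]
    (hθ : θ ∉ Set.range (algebraMap F E)) (hE : Fintype.card E = Fintype.card F ^ 2) :
    (univ : Finset F).offDiag.image
        (fun p => (θ + algebraMap F E p.1) / (θ + algebraMap F E p.2)) =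
      (univ.image (algebraMap F E))ᶜ := by
  refine eq_of_subset_of_card_le (fun x hx => ?_) ?_
  · obtain ⟨⟨α, β⟩, hαβ, rfl⟩ := mem_image.mp hx
    simp only [mem_offDiag, mem_univ, true_and] at hαβ
    simp only [mem_compl, mem_image, mem_univ, true_and, not_exists]
    intro t ht
    rw [eq_div_iff (add_algebraMap_ne_zero hθ β)] at ht
    obtain ⟨h₁, h₂⟩ := eq_and_eq_of_algebraMap_add_algebraMap_mul_eq (a := t * β) (b := t)
      (c := α) (d := 1) hθ (by simp only [map_mul, map_one]; linear_combination ht)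
    exact hαβ (by rw [← h₁, h₂, one_mul])
  · rw [card_image_of_injOn (injOn_div_offDiag hθ), offDiag_card, card_compl,
      card_image_of_injective _ (algebraMap F E).injective, hE, card_univ, sq]

theorem sum_algebraMap_mul_one_add_sum_eq_zero [CommRing R] [IsDomain R]
    (hθ : θ ∉ Set.range (algebraMap F E)) (hE : Fintype.card E = Fintype.card F ^ 2)
    {χ : MulChar E R} (hχ : χ ≠ 1) :
    (∑ y : F, χ (algebraMap F E y)) * (1 + ∑ α : F, χ (θ + algebraMap F E α)) = 0 := by
  classical
  have hrows := (bijective_algebraMap_add_algebraMap_mul hθ hE).sum_comp χ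
  rw [MulChar.sum_eq_zero_of_ne_one hχ, Fintype.sum_prod_type_right,
    Fintype.sum_eq_add_sum_compl 0] at hrows
  have hzero : (∑ y : F, χ (algebraMap F E y)) * ∑ α : F, χ (θ + algebraMap F E α) =
      ∑ v ∈ {0}ᶜ, χ (algebraMap F E v) * ∑ α : F, χ (θ + algebraMap F E α) := by
    rw [sum_mul, Fintype.sum_eq_add_sum_compl 0]
    simp [MulChar.map_zero]
  rw [mul_one_add, hzero,
    ← sum_congr rfl fun v hv => sum_algebraMap_add_algebraMap_mul_eq χ (by simpa using hv)]
  simpa using hrows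

theorem mul_conj_sum_eq_card (hθ : θ ∉ Set.range (algebraMap F E))
    (hE : Fintype.card E = Fintype.card F ^ 2) {χ : MulChar E ℂ} (hχ : χ ≠ 1)
    (hχF : χ.ringHomComap (algebraMap F E) ≠ 1) :
    (∑ α : F, χ (θ + algebraMap F E α)) * starRingEnd ℂ (∑ α : F, χ (θ + algebraMap F E α)) =
      Fintype.card F := by
  classical
  have hdiag : ∑ p ∈ (univ : Finset F).diag,
      χ ((θ + algebraMap F E p.1) / (θ + algebraMap F E p.2)) = Fintype.card F := by
    rw [sum_congr rfl fun p hp => by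
        rw [(mem_diag.mp hp).2, div_self (add_algebraMap_ne_zero hθ p.2), map_one],
      sum_const, diag_card, card_univ, nsmul_one]
  have hoffDiag : ∑ p ∈ (univ : Finset F).offDiag,
      χ ((θ + algebraMap F E p.1) / (θ + algebraMap F E p.2)) = 0 := by
    rw [← sum_image (injOn_div_offDiag hθ), image_offDiag_div_eq_compl_range hθ hE,
      eq_sub_of_add_eq (sum_compl_add_sum (univ.image (algebraMap F E)) χ),
      MulChar.sum_eq_zero_of_ne_one hχ,
      sum_image fun x _ y _ h => (algebraMap F E).injective h]
    simpa using MulChar.sum_eq_zero_of_ne_one hχF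
  calc _ = ∑ p ∈ univ ×ˢ univ, χ ((θ + algebraMap F E p.1) / (θ + algebraMap F E p.2)) := by
        simp_rw [map_sum, sum_mul_sum, sum_product, div_eq_mul_inv, map_mul,
          ← MulChar.inv_apply', ← MulChar.star_apply']
        rfl
    _ = Fintype.card F := by
      rw [← diag_union_offDiag, sum_union (disjoint_diag_offDiag _), hdiag, hoffDiag, add_zero]

end QuadraticExtension

theorem katz_character_sum_general (q : ℕ)
    (F E : Type*) [Field F] [Fintype F] [Field E] [Fintype E] [Algebra F E]
    (hF : Fintype.card F = q) (hE : Fintype.card E = q ^ 2)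
    (θ : E) (hθ : θ ∉ Set.range (algebraMap F E))
    (χ : MulChar E ℂ) (hχ : χ ≠ 1)
    (B : ℂ) (hB : B = ∑ α : F, χ (θ + algebraMap F E α)) :
    (¬ orderOf χ ∣ q + 1 → ‖B‖ = Real.sqrt q) ∧
    (orderOf χ ∣ q + 1 → B = -1) := by
  classical
  subst hF hB
  have hq : 1 < Fintype.card F := Fintype.one_lt_card
  have horder : orderOf χ ∣ Fintype.card F + 1 ↔ χ.ringHomComap (algebraMap F E) = 1 := by
    rw [← MulChar.orderOf_dvd_iff_ringHomComap_eq_one, Nat.card_eq_fintype_card,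
      Nat.card_eq_fintype_card, hE, ← Nat.mul_div_cancel (_ + 1) (Nat.sub_pos_of_lt hq),
      ← Nat.sq_sub_sq, one_pow]
  refine ⟨fun hnd => ?_, fun hd => ?_⟩
  · have hnormSq := mul_conj_sum_eq_card hθ hE hχ (mt horder.mpr hnd)
    rw [Complex.mul_conj] at hnormSq
    rw [Complex.norm_def, (by exact_mod_cast hnormSq : Complex.normSq _ = Fintype.card F)]
  · have hsumF : ∑ y : F, χ (algebraMap F E y) = Fintype.card Fˣ := by
      simp_rw [← MulChar.ringHomComap_apply, horder.mp hd, MulChar.sum_one_eq_card_units]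
    have hunits : (Fintype.card Fˣ : ℂ) ≠ 0 := by
      rw [Fintype.card_units, Nat.cast_ne_zero]
      omega
    have key := sum_algebraMap_mul_one_add_sum_eq_zero hθ hE hχ
    rw [hsumF] at key
    exact eq_neg_of_add_eq_zero_right ((mul_eq_zero.mp key).resolve_left hunits)

/-- Let `q` be a prime power, `θ ∈ F_{q²} \ F_q`, and `χ` a nontrivial
multiplicative character of `F_{q²}`. Put `B = Σ_{α ∈ F_q} χ(θ + α)`. If `ord(χ) ∤ q + 1`
then `|B| = √q`; if `ord(χ) ∣ q + 1` then `B = -1`. -/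
theorem katz_character_sum (q : ℕ) (hq : IsPrimePow q)
    (F E : Type*) [Field F] [Fintype F] [Field E] [Fintype E] [Algebra F E]
    (hF : Fintype.card F = q) (hE : Fintype.card E = q ^ 2)
    (θ : E) (hθ : θ ∉ Set.range (algebraMap F E))
    (χ : MulChar E ℂ) (hχ : χ ≠ 1)
    (B : ℂ) (hB : B = ∑ α : F, χ (θ + algebraMap F E α)) :
    (¬ orderOf χ ∣ q + 1 → ‖B‖ = Real.sqrt q) ∧
    (orderOf χ ∣ q + 1 → B = -1) :=
  katz_character_sum_general q F E hF hE θ hθ χ hχ B hB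
end

section
/- Let q be a prime power, n a positive integer, and Q = (q^n − 1)/(q − 1). If ξ ∈ F_{q^n}^* is Q-free, then there exists c ∈ F_q^* such that cξ is a primitive element of F_{q^n}; moreover, if in addition Tr(ξ²) = 0, then Tr((cξ)²) = 0. -/
open Polynomial

private lemma exists_add_mul_coprime {m n : ℕ} (hm : m ≠ 0) (x : ℕ) (hx : x.Coprime n) :
    ∃ k : ℕ, (x + k * n).Coprime m := by
  let ps := m.primeFactors.filter (fun p ↦ ¬p ∣ x)
  use ps.prod id
  apply Nat.coprime_of_dvd
  intro p pp hp hpn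
  by_cases hpx : p ∣ x
  · have h := Nat.dvd_sub hp hpx
    rw [add_comm, Nat.add_sub_cancel] at h
    rcases pp.dvd_mul.mp h with h | h
    · have ⟨q, hq, hq'⟩ := (pp.prime.dvd_finset_prod_iff id).mp h
      rw [Finset.mem_filter, Nat.mem_primeFactors,
        ← (Nat.prime_dvd_prime_iff_eq pp hq.1.1).mp hq'] at hq
      exact hq.2 hpx
    · exact Nat.Prime.not_coprime_iff_dvd.mpr ⟨p, pp, hpx, h⟩ hx
  · have pps : p ∈ ps := Finset.mem_filter.mpr ⟨Nat.mem_primeFactors.mpr ⟨pp, hpn, hm⟩, hpx⟩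
    have h := Nat.dvd_sub hp ((Finset.dvd_prod_of_mem id pps).mul_right n)
    rw [Nat.add_sub_cancel] at h
    contradiction

private lemma mem_range_of_pow_card (F E : Type*) [Field F] [Fintype F] [Field E] [Fintype E]
    [Algebra F E] (x : E) (hx : x ^ Fintype.card F = x) :
    ∃ c : F, algebraMap F E c = x := by
  classical
  set q := Fintype.card F with hq
  have hq2 : 1 < q := Fintype.one_lt_card
  set p : E[X] := X ^ q - X with hp
  have hpdeg : p.natDegree = q := by
    rw [hp, natDegree_sub_eq_left_of_natDegree_lt, natDegree_X_pow]
    rw [natDegree_X, natDegree_X_pow]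
    exact hq2
  have hp0 : p ≠ 0 := by
    intro h
    rw [h, natDegree_zero] at hpdeg
    omega
  set T : Finset E := Finset.univ.image (algebraMap F E) with hT
  have hTcard : T.card = q := by
    rw [hT, Finset.card_image_of_injective _ (algebraMap F E).injective, Finset.card_univ]
  have hroot : ∀ y : E, y ^ q = y → y ∈ p.roots.toFinset := by
    intro y hy
    rw [Multiset.mem_toFinset, mem_roots hp0]
    simp [hp, hy, sub_eq_zero]
  have hTsub : T ⊆ p.roots.toFinset := by
    intro y hy
    rw [hT, Finset.mem_image] at hy
    obtain ⟨c, -, rfl⟩ := hy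
    apply hroot
    rw [← map_pow, FiniteField.pow_card]
  by_contra hcon
  push_neg at hcon
  have hxT : x ∉ T := by
    intro hxT
    rw [hT, Finset.mem_image] at hxT
    obtain ⟨c, -, hc⟩ := hxT
    exact hcon c hc
  have hsub : insert x T ⊆ p.roots.toFinset := by
    intro y hy
    rcases Finset.mem_insert.mp hy with rfl | hy
    · exact hroot y hx
    · exact hTsub hy
  have h1 : (insert x T).card = q + 1 := by rw [Finset.card_insert_of_notMem hxT, hTcard]
  have h2 : p.roots.toFinset.card ≤ q := by
    calc p.roots.toFinset.card ≤ Multiset.card p.roots := Multiset.toFinset_card_le _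
    _ ≤ p.natDegree := Polynomial.card_roots' p
    _ = q := hpdeg
  have := Finset.card_le_card hsub
  omega

/-- Let `q` be a prime power, `n ≥ 1`, `Q = (q^n - 1)/(q - 1)`. If
`ξ ∈ F_{q^n}^*` is `Q`-free, then there is `c ∈ F_q^*` such that `cξ` is primitive (i.e. has
multiplicative order `q^n - 1`); moreover if also `Tr(ξ²) = 0` then `Tr((cξ)²) = 0`. -/
theorem Q_free_scale_to_primitive (q n : ℕ) (hq : IsPrimePow q) (hn : 1 ≤ n)
    (F E : Type*) [Field F] [Fintype F] [Field E] [Fintype E] [Algebra F E]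
    (hF : Fintype.card F = q) (hE : Fintype.card E = q ^ n)
    (Q : ℕ) (hQ : Q = (q ^ n - 1) / (q - 1))
    (ξ : E) (hξ : ξ ≠ 0)
    (hfree : ∀ d : ℕ, d ∣ Q → ∀ ζ : E, ξ = ζ ^ d → d = 1) :
    ∃ c : F, c ≠ 0 ∧ orderOf (algebraMap F E c * ξ) = q ^ n - 1 ∧
      (Algebra.trace F E (ξ ^ 2) = 0 →
        Algebra.trace F E ((algebraMap F E c * ξ) ^ 2) = 0) := by
  classical
  have hq2 : 2 ≤ q := hq.two_le
  set N : ℕ := q ^ n - 1 with hN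
  have hqn : 2 ≤ q ^ n := le_trans hq2 (Nat.le_self_pow (by omega) q)
  have hN0 : N ≠ 0 := by omega
  have hdvd : q - 1 ∣ N := by
    have := Nat.sub_dvd_pow_sub_pow q 1 n
    simpa using this
  have hNQ : N = Q * (q - 1) := by rw [hQ, Nat.div_mul_cancel hdvd]
  have hQdvd : Q ∣ N := ⟨q - 1, hNQ⟩
  -- generator of Eˣ
  obtain ⟨g, hg⟩ := IsCyclic.exists_generator (α := Eˣ)
  have hgord : orderOf g = N := by
    rw [orderOf_eq_card_of_forall_mem_zpowers hg, Nat.card_eq_fintype_card, Fintype.card_units, hE]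
  set u : Eˣ := Units.mk0 ξ hξ with hu
  obtain ⟨a, ha⟩ := (mem_powers_iff_mem_zpowers (x := g) (y := u)).mpr (hg u)
  -- coprimality of a with Q
  have hcop : Nat.Coprime a Q := by
    have hd : Nat.gcd a Q = 1 := by
      apply hfree (Nat.gcd a Q) (Nat.gcd_dvd_right a Q) ((g : E) ^ (a / Nat.gcd a Q))
      have : ξ = (g : E) ^ a := by
        have := congrArg (Units.val) ha
        simpa [hu] using this.symm
      rw [this, ← pow_mul, Nat.div_mul_cancel (Nat.gcd_dvd_left a Q)]
    exact hd
  -- lift to b coprime to N with b ≡ a mod Q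
  obtain ⟨k, hk⟩ := exists_add_mul_coprime hN0 a hcop
  set b : ℕ := a + k * Q with hb
  -- the scalar c' = g^(k*Q)
  set c' : Eˣ := g ^ (k * Q) with hc'
  have hc'pow : (c' : E) ^ (q - 1) = 1 := by
    have : c' ^ (q - 1) = 1 := by
      rw [hc', ← pow_mul, ← orderOf_dvd_iff_pow_eq_one, hgord, hNQ, mul_assoc]
      exact Dvd.dvd.mul_left dvd_rfl k
    calc (c' : E) ^ (q - 1) = ((c' ^ (q - 1) : Eˣ) : E) := by push_cast; ring
    _ = 1 := by rw [this]; rfl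
  have hc'q : (c' : E) ^ Fintype.card F = (c' : E) := by
    rw [hF]
    have : q = (q - 1) + 1 := by omega
    rw [this, pow_succ, hc'pow, one_mul]
  obtain ⟨c, hc⟩ := mem_range_of_pow_card F E (c' : E) hc'q
  refine ⟨c, ?_, ?_, ?_⟩
  · intro h
    rw [h, map_zero] at hc
    exact c'.ne_zero hc.symm
  · have hmul : algebraMap F E c * ξ = ((g ^ b : Eˣ) : E) := by
      rw [hc, hb, pow_add]
      have : ξ = ((g ^ a : Eˣ) : E) := by
        have := congrArg (Units.val) ha
        simpa [hu] using this.symm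
      rw [this, hc']
      push_cast
      ring
    rw [hmul, orderOf_units, orderOf_pow, hgord, Nat.Coprime.gcd_eq_one hk.symm, Nat.div_one]
  · intro htr
    have : (algebraMap F E c * ξ) ^ 2 = (c ^ 2) • (ξ ^ 2) := by
      rw [Algebra.smul_def, map_pow, mul_pow]
    rw [this, LinearMap.map_smul, htr, smul_zero]
end

section
/- Let q be an odd prime power and n a positive integer with (q,n) even, let β ∈ F_q, and let m be a divisor of the squarefree part of q^n − 1. Let r₁, …, r_s be divisors of m such that gcd(r_i, r_j) = r₀ for every i ≠ j and lcm(r₁, …, r_s) = m, where r₀ divides each r_i. Then N_β(m) ≥ Σ_{i=1}^s N_β(r_i) − (s − 1) N_β(r₀). -/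
/-- (Sieving inequality.) Let `q` be an odd prime power and `n ≥ 1` with
`(q,n)` even, `β ∈ F_q`, and `m` a squarefree divisor of `q^n - 1` (i.e. a divisor of the
squarefree part of `q^n - 1`). Let `r₁, …, r_s` divide `m` with `gcd(r_i, r_j) = r₀` for all
`i ≠ j`, `r₀ ∣ r_i`, and `lcm(r₁, …, r_s) = m`. Then, with `N β k` the number of `k`-free
`ξ ∈ F_{q^n}^*` with `Tr(ξ²) = β`: `N β m ≥ Σᵢ N β rᵢ - (s - 1) N β r₀`. -/
theorem sieving_inequality (q n : ℕ) (hq : IsPrimePow q) (hqodd : Odd q) (hn : 1 ≤ n)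
    (hpair : Even ((q ^ n - 1) / 2))
    (F E : Type*) [Field F] [Fintype F] [Field E] [Fintype E] [Algebra F E]
    (hF : Fintype.card F = q) (hE : Fintype.card E = q ^ n)
    (β : F)
    (m : ℕ) (hm : m ∣ q ^ n - 1) (hmsf : Squarefree m)
    (s : ℕ) (r : Fin s → ℕ) (r₀ : ℕ)
    (hdvd : ∀ i, r i ∣ m)
    (hgcd : ∀ i j, i ≠ j → Nat.gcd (r i) (r j) = r₀)
    (hr₀ : ∀ i, r₀ ∣ r i)
    (hlcm : Finset.univ.lcm r = m)
    (N : ℕ → ℕ)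
    (hN : ∀ k, N k = Nat.card {ξ : E // ξ ≠ 0 ∧
      (∀ d : ℕ, d ∣ k → ∀ ζ : E, ξ = ζ ^ d → d = 1) ∧ Algebra.trace F E (ξ ^ 2) = β}) :
    (N m : ℝ) ≥ (∑ i, (N (r i) : ℝ)) - ((s : ℝ) - 1) * N r₀ := by
  classical
  set P : ℕ → E → Prop := fun k ξ => ξ ≠ 0 ∧
      (∀ d : ℕ, d ∣ k → ∀ ζ : E, ξ = ζ ^ d → d = 1) ∧ Algebra.trace F E (ξ ^ 2) = β with hP
  have hNcard : ∀ k, N k = (Finset.univ.filter (P k)).card := by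
    intro k
    rw [hN k, Nat.card_eq_fintype_card, Fintype.card_subtype]
  have hmono : ∀ {a b : ℕ}, a ∣ b →
      Finset.univ.filter (P b) ⊆ Finset.univ.filter (P a) := by
    intro a b hab ξ hξ
    simp only [Finset.mem_filter, Finset.mem_univ, true_and, hP] at hξ ⊢
    exact ⟨hξ.1, fun d hd ζ hζ => hξ.2.1 d (hd.trans hab) ζ hζ, hξ.2.2⟩
  -- m ≠ 0
  have hq3 : 3 ≤ q := by
    rcases hq with ⟨p, k, hp, hk, rfl⟩
    have hpN : p.Prime := Nat.prime_iff.mpr hp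
    have hp2 : 2 ≤ p := hpN.two_le
    have hpne : p ≠ 2 := by
      rintro rfl
      have hev : Even (2 ^ k) := (Nat.even_pow).2 ⟨even_two, by omega⟩
      exact (Nat.not_odd_iff_even.2 hev) hqodd
    have hp3 : 3 ≤ p := by omega
    calc 3 ≤ p := hp3
    _ = p ^ 1 := (pow_one p).symm
    _ ≤ p ^ k := Nat.pow_le_pow_right (by omega) hk
  have hqn : 2 ≤ q ^ n - 1 := by
    have : 3 ≤ q ^ n := by
      calc 3 ≤ q := hq3
      _ = q ^ 1 := (pow_one q).symm
      _ ≤ q ^ n := Nat.pow_le_pow_right (by omega) hn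
    omega
  have hm0 : m ≠ 0 := by
    rintro rfl
    rw [Nat.zero_dvd] at hm
    omega
  -- a prime dividing m divides some r i
  have hprime_lcm : ∀ p : ℕ, p.Prime → p ∣ m → ∃ i, p ∣ r i := by
    intro p hp hpm
    have h1 : m ∣ ∏ i, r i := by
      rw [← hlcm]
      exact Finset.lcm_dvd fun i _ => Finset.dvd_prod_of_mem r (Finset.mem_univ i)
    have := (Prime.dvd_finset_prod_iff hp.prime r).1 (hpm.trans h1)
    obtain ⟨i, _, hi⟩ := this
    exact ⟨i, hi⟩
  rcases Nat.eq_zero_or_pos s with hs | hs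
  · -- s = 0 : m = 1 and the goal reduces to N r₀ ≤ N 1
    subst hs
    have hm1 : m = 1 := by
      rw [← hlcm]
      simp
    subst hm1
    have hsub : Finset.univ.filter (P r₀) ⊆ Finset.univ.filter (P 1) := by
      intro ξ hξ
      simp only [Finset.mem_filter, Finset.mem_univ, true_and, hP] at hξ ⊢
      exact ⟨hξ.1, fun d hd ζ _ => Nat.eq_one_of_dvd_one hd, hξ.2.2⟩
    have hle : N r₀ ≤ N 1 := by
      rw [hNcard, hNcard]
      exact Finset.card_le_card hsub
    simp only [Finset.univ_eq_empty, Finset.sum_empty, Nat.cast_zero]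
    have : (N r₀ : ℝ) ≤ N 1 := by exact_mod_cast hle
    linarith
  · obtain ⟨i₀⟩ : Nonempty (Fin s) := ⟨⟨0, hs⟩⟩
    set M := Finset.univ.filter (P m) with hM
    set A : Fin s → Finset E := fun i => Finset.univ.filter (P (r i)) with hA
    set A₀ := Finset.univ.filter (P r₀) with hA₀
    have hr₀m : r₀ ∣ m := (hr₀ i₀).trans (hdvd i₀)
    have hMA₀ : M ⊆ A₀ := hmono hr₀m
    have hAA₀ : ∀ i, A i ⊆ A₀ := fun i => hmono (hr₀ i)
    -- key covering
    have hcover : A₀ \ M ⊆ Finset.univ.biUnion (fun i => A₀ \ A i) := by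
      intro ξ hξ
      rw [Finset.mem_sdiff] at hξ
      obtain ⟨hξ₀, hξM⟩ := hξ
      rw [Finset.mem_biUnion]
      by_contra hcon
      push_neg at hcon
      have hAi : ∀ i, ξ ∈ A i := by
        intro i
        have := hcon i (Finset.mem_univ i)
        rw [Finset.mem_sdiff] at this
        push_neg at this
        exact this hξ₀
      apply hξM
      simp only [hM, hA₀, Finset.mem_filter, Finset.mem_univ, true_and, hP] at hξ₀ ⊢
      refine ⟨hξ₀.1, ?_, hξ₀.2.2⟩
      intro d hd ζ hζ
      by_contra hd1
      have hdpos : d ≠ 0 := by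
        rintro rfl
        rw [Nat.zero_dvd] at hd
        exact hm0 hd
      set p := d.minFac with hp
      have hpp : p.Prime := Nat.minFac_prime hd1
      have hpd : p ∣ d := Nat.minFac_dvd d
      obtain ⟨i, hpi⟩ := hprime_lcm p hpp (hpd.trans hd)
      have hξpow : ξ = (ζ ^ (d / p)) ^ p := by
        rw [← pow_mul, Nat.div_mul_cancel hpd]
        exact hζ
      have hmem := hAi i
      simp only [hA, Finset.mem_filter, Finset.mem_univ, true_and, hP] at hmem
      exact hpp.one_lt.ne' (hmem.2.1 p hpi (ζ ^ (d / p)) hξpow)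
    have hcard1 : (A₀ \ M).card ≤ ∑ i, (A₀ \ A i).card := by
      calc (A₀ \ M).card ≤ (Finset.univ.biUnion (fun i => A₀ \ A i)).card :=
            Finset.card_le_card hcover
      _ ≤ ∑ i, (A₀ \ A i).card := Finset.card_biUnion_le
    have hcard2 : (A₀ \ M).card + M.card = A₀.card :=
      Finset.card_sdiff_add_card_eq_card hMA₀
    have hcard3 : ∀ i, (A₀ \ A i).card + (A i).card = A₀.card := fun i =>
      Finset.card_sdiff_add_card_eq_card (hAA₀ i)
    -- pass to the reals
    have hR1 : ((A₀ \ M).card : ℝ) ≤ ∑ i, ((A₀ \ A i).card : ℝ) := by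
      exact_mod_cast hcard1
    have hR2 : ((A₀ \ M).card : ℝ) + M.card = A₀.card := by exact_mod_cast hcard2
    have hR3 : ∑ i, ((A₀ \ A i).card : ℝ) + ∑ i, ((A i).card : ℝ) = s * A₀.card := by
      rw [← Finset.sum_add_distrib]
      have : ∀ i ∈ Finset.univ, ((A₀ \ A i).card : ℝ) + ((A i).card : ℝ) = (A₀.card : ℝ) := by
        intro i _
        exact_mod_cast hcard3 i
      rw [Finset.sum_congr rfl this, Finset.sum_const, Finset.card_univ, Fintype.card_fin,
        nsmul_eq_mul]
    simp only [hNcard]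
    rw [← hM, ← hA₀]
    have : ∀ i ∈ Finset.univ, ((Finset.univ.filter (P (r i))).card : ℝ) = ((A i).card : ℝ) := by
      intro i _; rw [hA]
    rw [Finset.sum_congr rfl this]
    linarith
end

section
/- Let q be an odd prime power and n a positive integer with (q,n) even. Let χ be a nontrivial multiplicative character of F_{q^n} and b ∈ F_{q^n}^*. Set X_b(χ) = Σ_{ξ ∈ F_{q^n}^*} χ(ξ) ψ(b ξ²), G = Σ_{ξ ∈ F_{q^n}^*} χ₂(ξ) ψ(ξ), and C(χ) = Σ_{ξ ∈ F_{q^n}} χ(ξ) χ₂(ξ² − 1). Then |X_b(χ)|² = (1 + χ(−1)) q^n + χ₂(b)·G·C(χ), and moreover |C(χ)| ≤ 2 q^{n/2}. -/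
lemma Fintype.sum_eq_add_sum_units {G₀ M : Type*} [GroupWithZero G₀] [Fintype G₀]
    [DecidableEq G₀] [AddCommMonoid M] (f : G₀ → M) :
    ∑ x, f x = f 0 + ∑ u : G₀ˣ, f u := by
  rw [Fintype.sum_eq_add_sum_subtype_ne f 0]
  exact congrArg _ (Equiv.sum_comp unitsEquivNeZero fun x : {x : G₀ // x ≠ 0} => f x).symm

lemma Complex.norm_eq_sqrt_of_mul_star_eq {z : ℂ} {r : ℕ} (h : z * star z = r) :
    ‖z‖ = √r := by
  rw [← starRingEnd_apply, Complex.mul_conj'] at h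
  rw [← Real.sqrt_sq (norm_nonneg z)]
  exact congrArg _ (by exact_mod_cast h)

namespace canonAddChar

variable (p : ℕ) [Fact p.Prime] (K : Type*) [Field K] [Fintype K] [Algebra (ZMod p) K]

noncomputable def toAddChar : AddChar K ℂ :=
  ZMod.stdAddChar.compAddMonoidHom (Algebra.trace (ZMod p) K).toAddMonoidHom

lemma toAddChar_apply [CharP K p] (x : K) : toAddChar p K x = canonAddChar p K x := by
  simp only [toAddChar, canonAddChar, AddChar.compAddMonoidHom_apply,
    LinearMap.toAddMonoidHom_coe, ZMod.stdAddChar_apply, ZMod.toCircle_apply]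

lemma isPrimitive_toAddChar : (toAddChar p K).IsPrimitive := by
  refine AddChar.IsPrimitive.of_ne_one fun h => Algebra.trace_ne_zero (ZMod p) K ?_
  ext x
  apply ZMod.injective_stdAddChar
  simpa [toAddChar] using DFunLike.congr_fun h x

end canonAddChar

section Norms

variable {F : Type*} [Field F] [Fintype F]

lemma star_jacobiSum (χ φ : MulChar F ℂ) : star (jacobiSum χ φ) = jacobiSum χ⁻¹ φ⁻¹ := by
  simp [jacobiSum, star_sum, MulChar.star_apply']

lemma norm_jacobiSum_eq_sqrt {χ φ : MulChar F ℂ} (hχ : χ ≠ 1) (hφ : φ ≠ 1) (hχφ : χ * φ ≠ 1) :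
    ‖jacobiSum χ φ‖ = √(Fintype.card F) := by
  have hchar : ringChar ℂ ≠ ringChar F := by
    rw [ringChar.eq_zero]
    exact (CharP.char_is_prime F (ringChar F)).ne_zero.symm
  exact Complex.norm_eq_sqrt_of_mul_star_eq <|
    star_jacobiSum χ φ ▸ jacobiSum_mul_jacobiSum_inv hchar hχ hφ hχφ

lemma norm_jacobiSum_le_sqrt (χ : MulChar F ℂ) {φ : MulChar F ℂ} (hφ : φ ≠ 1) :
    ‖jacobiSum χ φ‖ ≤ √(Fintype.card F) := by
  have hone : 1 ≤ √(Fintype.card F : ℝ) :=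
    Real.one_le_sqrt.mpr (mod_cast Fintype.card_pos)
  rcases eq_or_ne χ 1 with rfl | hχ
  · simpa [jacobiSum_one_nontrivial hφ] using hone
  rcases eq_or_ne (χ * φ) 1 with hχφ | hχφ
  · have hsq : χ (-1) ^ 2 = 1 := by rw [← map_pow, neg_one_sq, map_one]
    rw [eq_inv_of_mul_eq_one_right hχφ, jacobiSum_nontrivial_inv hχ, norm_neg,
      Complex.norm_eq_one_of_pow_eq_one hsq two_ne_zero]
    exact hone
  · exact (norm_jacobiSum_eq_sqrt hχ hφ hχφ).le

end Norms

section SquareRoot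

variable {F : Type*} [Field F] [Fintype F] [DecidableEq F]

lemma FiniteField.pow_card_div_two_eq_neg_one (hF : ringChar F ≠ 2) {g : Fˣ}
    (hg : ∀ x, x ∈ Subgroup.zpowers g) : (g : F) ^ (Fintype.card F / 2) = -1 := by
  refine (pow_dichotomy hF g.ne_zero).resolve_left fun h => ?_
  have hdvd : orderOf g ∣ Fintype.card F / 2 :=
    orderOf_dvd_of_pow_eq_one (Units.ext (by simpa using h))
  rw [orderOf_eq_card_of_forall_mem_zpowers hg, Nat.card_eq_fintype_card,
    Fintype.card_units] at hdvd
  have hodd := odd_card_of_char_ne_two hF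
  have htwo := Fintype.one_lt_card (α := F)
  have := Nat.le_of_dvd (by omega) hdvd
  omega

lemma MulChar.exists_mul_self_eq_of_apply_neg_one {R : Type*} [Field R] [IsAlgClosed R]
    (hF : ringChar F ≠ 2) {χ : MulChar F R} (hχ : χ (-1) = 1) : ∃ ω : MulChar F R, ω * ω = χ := by
  obtain ⟨g, hg⟩ := IsCyclic.exists_generator (α := Fˣ)
  obtain ⟨z, hz⟩ := IsAlgClosed.exists_pow_nat_eq (χ g) two_pos
  have hz0 : z ≠ 0 := by
    rintro rfl
    exact (g.isUnit.map χ).ne_zero (by simpa using hz.symm)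
  have hcard : Fintype.card Fˣ = 2 * (Fintype.card F / 2) := by
    have := FiniteField.odd_card_of_char_ne_two hF
    rw [Fintype.card_units]
    omega
  have hzN : z ^ Fintype.card Fˣ = 1 := by
    rw [hcard, pow_mul, hz, ← map_pow, FiniteField.pow_card_div_two_eq_neg_one hF hg, hχ]
  have hmem : Units.mk0 z hz0 ∈ rootsOfUnity (Fintype.card Fˣ) R := by
    rw [mem_rootsOfUnity]
    exact Units.ext (by simpa using hzN)
  refine ⟨ofRootOfUnity hmem hg, (eq_iff hg _ _).mpr ?_⟩
  rw [mul_apply, ofRootOfUnity_spec, Units.val_mk0, ← sq, hz]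

end SquareRoot

section QuadraticChar

variable {F : Type*} [Field F] [Fintype F] [DecidableEq F]

lemma sum_comp_sq (hF : ringChar F ≠ 2) {M : Type*} [AddCommGroup M] (f : F → M) :
    ∑ x, f (x ^ 2) = ∑ y, (quadraticChar F y + 1) • f y := by
  rw [← Finset.sum_fiberwise Finset.univ (fun x => x ^ 2) (fun x => f (x ^ 2))]
  refine Finset.sum_congr rfl fun y _ => ?_
  rw [Finset.sum_congr rfl fun x hx => by rw [(Finset.mem_filter.mp hx).2], Finset.sum_const,
    ← quadraticChar_card_sqrts hF y, natCast_zsmul]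
  congr
  ext
  simp

variable (F) in
noncomputable def complexQuadraticChar : MulChar F ℂ :=
  (quadraticChar F).ringHomComp (Int.castRingHom ℂ)

local notation "χ₂" => complexQuadraticChar F

lemma complexQuadraticChar_apply (x : F) : χ₂ x = quadraticChar F x := rfl

lemma complexQuadraticChar_ne_one (hF : ringChar F ≠ 2) : χ₂ ≠ 1 :=
  (MulChar.ringHomComp_ne_one_iff Int.cast_injective).mpr (quadraticChar_ne_one hF)

lemma isQuadratic_complexQuadraticChar : (χ₂).IsQuadratic :=
  (quadraticChar_isQuadratic F).comp _

lemma complexQuadraticChar_neg_one (h : Fintype.card F % 4 ≠ 3) : χ₂ (-1) = 1 := by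
  rw [complexQuadraticChar_apply, quadraticChar_one_iff_isSquare (neg_ne_zero.mpr one_ne_zero)
    |>.mpr (FiniteField.isSquare_neg_one_iff.mpr h), Int.cast_one]

lemma sum_addChar_mul_sq (hF : ringChar F ≠ 2) {ψ : AddChar F ℂ} (hψ : ψ.IsPrimitive) (c : F) :
    ∑ x, ψ (c * x ^ 2) = χ₂ c * gaussSum χ₂ ψ + if c = 0 then (Fintype.card F : ℂ) else 0 := by
  have h0 := AddChar.sum_mulShift c hψ
  push_cast at h0
  rw [sum_comp_sq hF (fun y => ψ (c * y)), ← h0]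
  simp only [add_smul, one_smul, Finset.sum_add_distrib, zsmul_eq_mul,
    ← complexQuadraticChar_apply, mul_comm _ c]
  congr 1
  by_cases hc : c = 0
  · simp [hc, MulChar.sum_eq_zero_of_ne_one (complexQuadraticChar_ne_one hF), MulChar.map_zero]
  · have h := gaussSum_mulShift_eq χ₂ ψ (Ne.isUnit hc).unit
    rw [isQuadratic_complexQuadraticChar.inv, IsUnit.unit_spec] at h
    exact h

lemma sum_units_addChar_mul_sq (hF : ringChar F ≠ 2) {ψ : AddChar F ℂ} (hψ : ψ.IsPrimitive)
    (c : F) :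
    ∑ η : Fˣ, ψ (c * η ^ 2) =
      χ₂ c * gaussSum χ₂ ψ + (if c = 0 then (Fintype.card F : ℂ) else 0) - 1 := by
  have h := Fintype.sum_eq_add_sum_units fun x => ψ (c * x ^ 2)
  rw [sum_addChar_mul_sq hF hψ] at h
  simp only [ne_eq, OfNat.ofNat_ne_zero, not_false_eq_true, zero_pow, mul_zero,
    AddChar.map_zero_eq_one] at h
  linear_combination -h

lemma sum_mulChar_mul_quadraticChar_sq_sub_one_eq_zero {χ : MulChar F ℂ} (hχ : χ (-1) ≠ 1) :
    ∑ x, χ x * χ₂ (x ^ 2 - 1) = 0 := by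
  have h : ∑ x, χ x * χ₂ (x ^ 2 - 1) = χ (-1) * ∑ x, χ x * χ₂ (x ^ 2 - 1) := by
    rw [Finset.mul_sum]
    refine Fintype.sum_equiv (Equiv.neg F) _ _ fun x => ?_
    rw [Equiv.neg_apply, ← mul_assoc, ← map_mul, neg_one_mul, neg_neg, neg_sq]
  exact (mul_eq_zero.mp (by linear_combination h : (1 - χ (-1)) * _ = 0)).resolve_left
    (sub_ne_zero.mpr hχ.symm)

lemma sum_mulChar_mul_quadraticChar_sq_sub_one_eq_jacobiSum_add (hF : ringChar F ≠ 2)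
    (h4 : Fintype.card F % 4 ≠ 3) {χ ω : MulChar F ℂ} (hω : ω * ω = χ) :
    ∑ x, χ x * χ₂ (x ^ 2 - 1) = jacobiSum ω χ₂ + jacobiSum (ω * χ₂) χ₂ := by
  have hrefl : ∀ y : F, χ₂ (y - 1) = χ₂ (1 - y) := fun y => by
    rw [← neg_sub, neg_eq_neg_one_mul, map_mul, complexQuadraticChar_neg_one h4, one_mul]
  calc ∑ x, χ x * χ₂ (x ^ 2 - 1) = ∑ x, ω (x ^ 2) * χ₂ (x ^ 2 - 1) := by
        simp only [← hω, MulChar.mul_apply, sq, map_mul]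
    _ = ∑ y, (quadraticChar F y + 1) • (ω y * χ₂ (y - 1)) :=
        sum_comp_sq hF fun y => ω y * χ₂ (y - 1)
    _ = _ := by
        simp only [jacobiSum, ← Finset.sum_add_distrib]
        refine Finset.sum_congr rfl fun y _ => ?_
        rw [hrefl, zsmul_eq_mul, MulChar.mul_apply, Int.cast_add, Int.cast_one,
          ← complexQuadraticChar_apply]
        ring

lemma norm_sum_mulChar_mul_quadraticChar_sq_sub_one_le (hF : ringChar F ≠ 2)
    (h4 : Fintype.card F % 4 ≠ 3) (χ : MulChar F ℂ) :
    ‖∑ x, χ x * χ₂ (x ^ 2 - 1)‖ ≤ 2 * √(Fintype.card F) := by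
  by_cases hχ : χ (-1) = 1
  · obtain ⟨ω, hω⟩ := MulChar.exists_mul_self_eq_of_apply_neg_one hF hχ
    rw [sum_mulChar_mul_quadraticChar_sq_sub_one_eq_jacobiSum_add hF h4 hω, two_mul]
    exact (norm_add_le _ _).trans <| add_le_add
      (norm_jacobiSum_le_sqrt _ (complexQuadraticChar_ne_one hF))
      (norm_jacobiSum_le_sqrt _ (complexQuadraticChar_ne_one hF))
  · rw [sum_mulChar_mul_quadraticChar_sq_sub_one_eq_zero hχ, norm_zero]
    positivity

lemma sum_ite_sq_eq_one (hF : ringChar F ≠ 2) {R : Type*} [CommSemiring R]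
    (χ : MulChar F R) : ∑ t : F, (if t ^ 2 = 1 then χ t else 0) = 1 + χ (-1) := by
  have hroots : Finset.univ.filter (fun t : F => t ^ 2 = 1) = {1, -1} := by
    ext t
    simp [sq, mul_self_eq_one_iff]
  rw [← Finset.sum_filter, hroots, Finset.sum_pair (Ring.neg_one_ne_one_of_char_ne_two hF).symm,
    map_one]

lemma sum_mul_star_sum_mulChar_mul_addChar_sq (χ : MulChar F ℂ) (ψ : AddChar F ℂ) (b : F) :
    (∑ ξ : Fˣ, χ ξ * ψ (b * ξ ^ 2)) * star (∑ ξ : Fˣ, χ ξ * ψ (b * ξ ^ 2)) =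
      ∑ t : Fˣ, χ t * ∑ η : Fˣ, ψ (b * (t ^ 2 - 1) * η ^ 2) := by
  have hstar : star (∑ ξ : Fˣ, χ ξ * ψ (b * ξ ^ 2)) = ∑ η : Fˣ, χ⁻¹ η * ψ (-(b * η ^ 2)) := by
    simp only [star_sum, star_mul', MulChar.star_apply', AddChar.map_neg_eq_conj, starRingEnd_apply]
  rw [hstar, Finset.sum_mul_sum, Finset.sum_comm]
  simp_rw [Finset.mul_sum]
  conv_rhs => rw [Finset.sum_comm]
  refine Finset.sum_congr rfl fun η _ => ?_
  rw [← Equiv.sum_comp (Equiv.mulLeft η)]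
  refine Finset.sum_congr rfl fun t _ => ?_
  have hχ : χ η * χ⁻¹ η = 1 := by
    rw [MulChar.inv_apply_eq_inv', mul_inv_cancel₀ (η.isUnit.map χ).ne_zero]
  have hψ : ψ (b * (η * t) ^ 2) * ψ (-(b * η ^ 2)) = ψ (b * (t ^ 2 - 1) * η ^ 2) := by
    rw [← AddChar.map_add_eq_mul]
    ring_nf
  rw [Equiv.coe_mulLeft, Units.val_mul, map_mul χ, ← hψ]
  linear_combination (χ t * ψ (b * (η * t) ^ 2) * ψ (-(b * η ^ 2))) * hχ

lemma norm_sq_sum_mulChar_mul_addChar_sq (hF : ringChar F ≠ 2) {χ : MulChar F ℂ} (hχ : χ ≠ 1)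
    {ψ : AddChar F ℂ} (hψ : ψ.IsPrimitive) {b : F} (hb : b ≠ 0) :
    (‖∑ ξ : Fˣ, χ ξ * ψ (b * ξ ^ 2)‖ : ℂ) ^ 2 =
      (1 + χ (-1)) * Fintype.card F + χ₂ b * gaussSum χ₂ ψ * ∑ x, χ x * χ₂ (x ^ 2 - 1) := by
  have hinner (t : Fˣ) : χ t * ∑ η : Fˣ, ψ (b * (t ^ 2 - 1) * η ^ 2) =
      χ₂ b * gaussSum χ₂ ψ * (χ t * χ₂ (t ^ 2 - 1)) +
        (if (t : F) ^ 2 = 1 then χ t else 0) * Fintype.card F - χ t := by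
    rw [sum_units_addChar_mul_sq hF hψ, map_mul]
    by_cases ht : (t : F) ^ 2 = 1
    · simp only [ht, sub_self, mul_zero, ↓reduceIte]
      ring
    · simp only [mul_eq_zero, hb, sub_ne_zero.mpr ht, or_self, ↓reduceIte, add_zero, ht, zero_mul]
      ring
  have hunits (f : F → ℂ) (hf : f 0 = 0) : ∑ t : Fˣ, f t = ∑ x, f x := by
    rw [Fintype.sum_eq_add_sum_units f, hf, zero_add]
  rw [← Complex.mul_conj', starRingEnd_apply, sum_mul_star_sum_mulChar_mul_addChar_sq]
  simp only [hinner, Finset.sum_sub_distrib, Finset.sum_add_distrib, ← Finset.mul_sum,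
    ← Finset.sum_mul]
  rw [hunits (fun x => χ x * χ₂ (x ^ 2 - 1)) (by rw [MulChar.map_zero, zero_mul]),
    hunits (fun x => if x ^ 2 = 1 then χ x else 0) (by simp), hunits χ (MulChar.map_zero χ),
    sum_ite_sq_eq_one hF, MulChar.sum_eq_zero_of_ne_one hχ]
  ring

end QuadraticChar

theorem abs_sq_X_eq_general (p q n : ℕ) [Fact p.Prime] (hp : Odd p)
    (hpair : Even ((q ^ n - 1) / 2))
    (E : Type*) [Field E] [Fintype E] [DecidableEq E] [CharP E p] [Algebra (ZMod p) E]
    (hE : Fintype.card E = q ^ n)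
    (χ : MulChar E ℂ) (hχ : χ ≠ 1) (b : E) (hb : b ≠ 0)
    (X G C : ℂ)
    (hX : X = ∑ ξ : Eˣ, χ (ξ : E) * canonAddChar p E (b * (ξ : E) ^ 2))
    (hG : G = ∑ ξ : Eˣ, ((quadraticChar E (ξ : E) : ℤ) : ℂ) * canonAddChar p E (ξ : E))
    (hC : C = ∑ ξ : E, χ ξ * ((quadraticChar E (ξ ^ 2 - 1) : ℤ) : ℂ)) :
    ((‖X‖ : ℝ) : ℂ) ^ 2 =
        (1 + χ (-1)) * (q : ℂ) ^ n + ((quadraticChar E b : ℤ) : ℂ) * G * C ∧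
    ‖C‖ ≤ 2 * Real.sqrt ((q : ℝ) ^ n) := by
  set ψ := canonAddChar.toAddChar p E
  have hE2 : ringChar E ≠ 2 := by
    rw [ringChar.eq E p]
    rintro rfl
    exact Nat.not_odd_iff_even.mpr even_two hp
  have hE4 : Fintype.card E % 4 ≠ 3 := by
    have := FiniteField.odd_card_of_char_ne_two hE2
    rw [Nat.even_iff] at hpair
    omega
  have hX' : X = ∑ ξ : Eˣ, χ ξ * ψ (b * ξ ^ 2) := by
    simp only [hX, ψ, canonAddChar.toAddChar_apply]
  have hG' : G = gaussSum (complexQuadraticChar E) ψ := by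
    rw [hG, gaussSum, Fintype.sum_eq_add_sum_units fun x => complexQuadraticChar E x * ψ x,
      MulChar.map_zero, zero_mul, zero_add]
    simp only [ψ, canonAddChar.toAddChar_apply, complexQuadraticChar_apply]
  constructor
  · rw [hX', norm_sq_sum_mulChar_mul_addChar_sq hE2 hχ (canonAddChar.isPrimitive_toAddChar p E) hb,
      hG', hC, hE]
    push_cast
    rfl
  · have h := norm_sum_mulChar_mul_quadraticChar_sq_sub_one_le hE2 hE4 χ
    rw [hE, Nat.cast_pow] at h
    exact hC ▸ h

/-- Let `q` be an odd prime power and `n ≥ 1` with `(q,n)` even. With `χ`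
a nontrivial multiplicative character of `F_{q^n}` and `b ∈ F_{q^n}^*`, set
`X = Σ_{ξ ∈ F^*} χ(ξ)ψ(bξ²)`, `G = Σ_{ξ ∈ F^*} χ₂(ξ)ψ(ξ)`, and
`C = Σ_{ξ ∈ F} χ(ξ)χ₂(ξ² - 1)`. Then `|X|² = (1 + χ(-1))q^n + χ₂(b)·G·C` and
`|C| ≤ 2q^{n/2}`. -/
theorem abs_sq_X_eq (p a q n : ℕ) [Fact p.Prime] (hp : Odd p) (ha : 0 < a) (hq : q = p ^ a)
    (hn : 1 ≤ n) (hpair : Even ((q ^ n - 1) / 2))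
    (E : Type*) [Field E] [Fintype E] [DecidableEq E] [CharP E p] [Algebra (ZMod p) E]
    (hE : Fintype.card E = q ^ n)
    (χ : MulChar E ℂ) (hχ : χ ≠ 1) (b : E) (hb : b ≠ 0)
    (X G C : ℂ)
    (hX : X = ∑ ξ : Eˣ, χ (ξ : E) * canonAddChar p E (b * (ξ : E) ^ 2))
    (hG : G = ∑ ξ : Eˣ, ((quadraticChar E (ξ : E) : ℤ) : ℂ) * canonAddChar p E (ξ : E))
    (hC : C = ∑ ξ : E, χ ξ * ((quadraticChar E (ξ ^ 2 - 1) : ℤ) : ℂ)) :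
    ((‖X‖ : ℝ) : ℂ) ^ 2 =
        (1 + χ (-1)) * (q : ℂ) ^ n + ((quadraticChar E b : ℤ) : ℂ) * G * C ∧
    ‖C‖ ≤ 2 * Real.sqrt ((q : ℝ) ^ n) :=
  abs_sq_X_eq_general p q n hp hpair E hE χ hχ b hb X G C hX hG hC
end

section
/- Let q be a prime power with q ≡ 1 (mod 4), and let n be an odd positive integer. Let χ be a nontrivial multiplicative character of F_{q^n} and let c ∈ F_q^* be a nonsquare in F_q. Then |X₁(χ)| + |X_c(χ)| ≤ 2√2 · q^{n/2}, where X_b(χ) = Σ_{ξ ∈ F_{q^n}^*} χ(ξ) ψ(b ξ²) and q^{n/2} denotes the positive real square root of q^n. -/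
/-!
Expanding `|X_b|²` and substituting `x = t y` gives `∑_t χ(t) ∑_y ψ(b (t² - 1) y²)`.
Since `c` stays a nonsquare in the odd-degree extension (take norms), `y²` and `c y²`
together run over every element of `F_{q^n}` exactly twice, so the inner sums for `b = 1`
and `b = c` add up to `2 q^n` if `t = ±1` and to `0` otherwise. Hence
`|X₁|² + |X_c|² = 2 q^n (1 + χ(-1)) ≤ 4 q^n`, and
`|X₁| + |X_c| ≤ √2 · √(|X₁|² + |X_c|²)`.
-/

open Finset ComplexConjugate

theorem not_isSquare_algebraMap_of_odd_finrank {F E : Type*} [Field F] [Field E] [Algebra F E]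
    (hodd : Odd (Module.finrank F E)) {c : F} (hc : ¬IsSquare c) :
    ¬IsSquare (algebraMap F E c) := by
  rintro ⟨y, hy⟩
  obtain ⟨k, hk⟩ := hodd
  have hc0 : c ≠ 0 := fun h => hc (h ▸ .zero)
  have hnorm : Algebra.norm F y * Algebra.norm F y = c ^ (2 * k + 1) := by
    rw [← map_mul, ← hy, Algebra.norm_algebraMap, hk]
  refine hc ⟨Algebra.norm F y / c ^ k, ?_⟩
  rw [div_mul_div_comm, hnorm]
  field_simp
  ring

theorem Fintype.sum_units_eq_sum_of_map_zero {G₀ M : Type*} [GroupWithZero G₀] [Fintype G₀]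
    [DecidableEq G₀] [AddCommMonoid M] {f : G₀ → M} (hf : f 0 = 0) :
    ∑ u : G₀ˣ, f u = ∑ x, f x :=
  calc ∑ u : G₀ˣ, f u = ∑ x : {x : G₀ // x ≠ 0}, f x :=
        Fintype.sum_equiv unitsEquivNeZero _ _ fun _ => rfl
    _ = ∑ x ∈ univ.filter (· ≠ 0), f x := (sum_subtype _ (by simp) _).symm
    _ = ∑ x, f x := sum_filter_of_ne fun x _ hx h => hx (h ▸ hf)

namespace FiniteField

variable {F M : Type*} [Field F] [Fintype F] [AddCommGroup M]

theorem sum_sq_eq_sum_quadraticChar_add_one [DecidableEq F] (hF : ringChar F ≠ 2) (f : F → M) :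
    ∑ x, f (x ^ 2) = ∑ a, (quadraticChar F a + 1) • f a := by
  rw [← sum_fiberwise univ (fun x : F => x ^ 2)]
  refine sum_congr rfl fun a _ => ?_
  rw [← quadraticChar_card_sqrts hF a, sum_congr rfl fun x hx => by rw [(mem_filter.mp hx).2]]
  simp

theorem sum_sq_add_sum_mul_sq_of_not_isSquare (hF : ringChar F ≠ 2) {c : F} (hc : ¬IsSquare c)
    (f : F → M) : ∑ x, f (x ^ 2) + ∑ x, f (c * x ^ 2) = 2 • ∑ x, f x := by
  classical
  have hc0 : c ≠ 0 := fun h => hc (h ▸ .zero)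
  have hηc : quadraticChar F c = -1 := quadraticChar_neg_one_iff_not_isSquare.mpr hc
  have hshift :
      ∑ a, (quadraticChar F a + 1) • f (c * a) = ∑ b, (1 - quadraticChar F b) • f b := by
    refine Fintype.sum_equiv (Equiv.mulLeft₀ c hc0) _ _ fun a => ?_
    rw [Equiv.mulLeft₀_apply, map_mul, hηc]
    congr 1; ring
  rw [sum_sq_eq_sum_quadraticChar_add_one hF, sum_sq_eq_sum_quadraticChar_add_one hF (f <| c * ·),
    hshift, ← sum_add_distrib, two_nsmul, ← sum_add_distrib]
  refine sum_congr rfl fun a _ => ?_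
  rw [← add_smul, show quadraticChar F a + 1 + (1 - quadraticChar F a) = 2 by ring, two_zsmul]

end FiniteField

section TraceAddChar

variable (p : ℕ) [Fact p.Prime] (K : Type*) [Field K] [Algebra (ZMod p) K]

noncomputable def traceAddChar : AddChar K ℂ :=
  ZMod.stdAddChar.compAddMonoidHom (Algebra.trace (ZMod p) K).toAddMonoidHom

theorem traceAddChar_apply [Fintype K] [CharP K p] (x : K) :
    traceAddChar p K x = canonAddChar p K x := by
  simp [traceAddChar, canonAddChar, ZMod.stdAddChar_apply, ZMod.toCircle_apply]

theorem isPrimitive_traceAddChar [Finite K] : (traceAddChar p K).IsPrimitive := by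
  refine AddChar.IsPrimitive.of_ne_one fun h => ?_
  obtain ⟨x, hx⟩ := Algebra.trace_surjective (ZMod p) K 1
  have := DFunLike.congr_fun h x
  simp only [traceAddChar, AddChar.compAddMonoidHom_apply, LinearMap.toAddMonoidHom_coe, hx,
    AddChar.one_apply] at this
  exact one_ne_zero (ZMod.injective_stdAddChar (this.trans (AddChar.map_zero_eq_one _).symm))

end TraceAddChar

section QuadGaussSum

variable {E : Type*} [Field E] [Fintype E]

/-- The sum `X_b(χ)`, taken over all of `E` instead of `Eˣ` since `χ 0 = 0`. -/
noncomputable def quadGaussSum (ψ : AddChar E ℂ) (χ : MulChar E ℂ) (b : E) : ℂ :=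
  ∑ x, χ x * ψ (b * x ^ 2)

theorem quadGaussSum_mul_conj (ψ : AddChar E ℂ) {χ : MulChar E ℂ} (hχ : χ ≠ 1) (b : E) :
    quadGaussSum ψ χ b * conj (quadGaussSum ψ χ b) =
      ∑ t, χ t * ∑ y, ψ ((t ^ 2 - 1) * (b * y ^ 2)) := by
  have hy : ∀ y, ∑ x, χ x * χ y⁻¹ * ψ (b * x ^ 2 - b * y ^ 2) =
      ∑ t, χ t * ψ ((t ^ 2 - 1) * (b * y ^ 2)) := fun y => by
    rcases eq_or_ne y 0 with rfl | hy0
    -- both sides vanish at `y = 0`, the right one because `∑ t, χ t = 0`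
    · simp [MulChar.sum_eq_zero_of_ne_one hχ, MulChar.map_zero]
    refine (Fintype.sum_equiv (Equiv.mulRight₀ y hy0) _ _ fun t => ?_).symm
    rw [Equiv.mulRight₀_apply, ← map_mul, mul_inv_cancel_right₀ hy0]
    congr 2; ring
  calc quadGaussSum ψ χ b * conj (quadGaussSum ψ χ b)
      = ∑ y, ∑ x, χ x * χ y⁻¹ * ψ (b * x ^ 2 - b * y ^ 2) := by
        simp only [quadGaussSum, map_sum, map_mul, mul_sum, sum_mul]
        refine sum_congr rfl fun y _ => sum_congr rfl fun x _ => ?_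
        rw [← AddChar.map_neg_eq_conj, RCLike.star_def.symm, MulChar.star_apply',
          MulChar.inv_apply', sub_eq_add_neg, AddChar.map_add_eq_mul]
        ring
    _ = ∑ t, χ t * ∑ y, ψ ((t ^ 2 - 1) * (b * y ^ 2)) := by
        simp only [hy, mul_sum]
        exact sum_comm

variable [DecidableEq E]

theorem sum_mul_ite_sq_sub_one (hE : ringChar E ≠ 2) (f : E → ℂ) (N : ℂ) :
    ∑ t, f t * (if t ^ 2 - 1 = 0 then N else 0) = N * (f 1 + f (-1)) := by
  have hne : (1 : E) ≠ -1 := (Ring.neg_one_ne_one_of_char_ne_two hE).symm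
  have hroots : ∀ t : E, t ^ 2 - 1 = 0 ↔ t ∈ ({1, -1} : Finset E) := fun t => by
    rw [sub_eq_zero, sq_eq_one_iff, mem_insert, mem_singleton]
  simp only [mul_ite, mul_zero, hroots, sum_ite_mem, univ_inter, sum_pair hne]
  ring

theorem quadGaussSum_mul_conj_add (hE : ringChar E ≠ 2) {ψ : AddChar E ℂ}
    (hψ : ψ.IsPrimitive) {χ : MulChar E ℂ} (hχ : χ ≠ 1) {c : E} (hc : ¬IsSquare c) :
    quadGaussSum ψ χ 1 * conj (quadGaussSum ψ χ 1) +
      quadGaussSum ψ χ c * conj (quadGaussSum ψ χ c) = 2 * Fintype.card E * (1 + χ (-1)) := by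
  have hinner : ∀ t : E,
      ∑ y, ψ ((t ^ 2 - 1) * (1 * y ^ 2)) + ∑ y, ψ ((t ^ 2 - 1) * (c * y ^ 2)) =
        2 * if t ^ 2 - 1 = 0 then (Fintype.card E : ℂ) else 0 := fun t => by
    simp only [one_mul]
    rw [FiniteField.sum_sq_add_sum_mul_sq_of_not_isSquare hE hc (fun s => ψ ((t ^ 2 - 1) * s)),
      two_nsmul, two_mul]
    simp only [mul_comm (t ^ 2 - 1), AddChar.sum_mulShift _ hψ, Nat.cast_ite, Nat.cast_zero]
  rw [quadGaussSum_mul_conj ψ hχ, quadGaussSum_mul_conj ψ hχ, ← sum_add_distrib]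
  simp only [← mul_add, hinner, mul_left_comm _ (2 : ℂ), ← mul_sum,
    sum_mul_ite_sq_sub_one hE]
  rw [map_one]; ring

theorem sq_norm_quadGaussSum_add_sq_norm_le (hE : ringChar E ≠ 2) {ψ : AddChar E ℂ}
    (hψ : ψ.IsPrimitive) {χ : MulChar E ℂ} (hχ : χ ≠ 1) {c : E} (hc : ¬IsSquare c) :
    ‖quadGaussSum ψ χ 1‖ ^ 2 + ‖quadGaussSum ψ χ c‖ ^ 2 ≤ 4 * Fintype.card E := by
  have h := quadGaussSum_mul_conj_add hE hψ hχ hc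
  rw [Complex.mul_conj, Complex.mul_conj, ← Complex.ofReal_add] at h
  rw [Complex.sq_norm, Complex.sq_norm]
  rcases mul_self_eq_one_iff.mp (by rw [← map_mul, neg_mul_neg, mul_one, map_one] :
      χ (-1) * χ (-1) = 1) with h1 | h1
  · rw [h1] at h
    refine le_of_eq ?_
    exact_mod_cast h.trans (by ring : 2 * (Fintype.card E : ℂ) * (1 + 1) = 4 * Fintype.card E)
  · rw [h1, add_neg_cancel, mul_zero] at h
    rw [Complex.ofReal_eq_zero.mp h]
    positivity

theorem norm_quadGaussSum_add_norm_le (hE : ringChar E ≠ 2) {ψ : AddChar E ℂ}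
    (hψ : ψ.IsPrimitive) {χ : MulChar E ℂ} (hχ : χ ≠ 1) {c : E} (hc : ¬IsSquare c) :
    ‖quadGaussSum ψ χ 1‖ + ‖quadGaussSum ψ χ c‖ ≤ 2 * √2 * √(Fintype.card E) := by
  have h := sq_norm_quadGaussSum_add_sq_norm_le hE hψ hχ hc
  set a := ‖quadGaussSum ψ χ 1‖
  set b := ‖quadGaussSum ψ χ c‖
  calc a + b ≤ √(2 ^ 2 * 2 * Fintype.card E) :=
        Real.le_sqrt_of_sq_le (by nlinarith [sq_nonneg (a - b)])
    _ = 2 * √2 * √(Fintype.card E) := by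
        rw [Real.sqrt_mul (by positivity), Real.sqrt_mul (by positivity),
          Real.sqrt_sq zero_le_two]

end QuadGaussSum

theorem abs_X_one_add_abs_X_c_le_general (p q n : ℕ) [Fact p.Prime]
    (hq4 : q % 4 = 1) (hnodd : Odd n)
    (F E : Type*) [Field F] [Fintype F] [Field E] [Fintype E] [DecidableEq E]
    [Algebra F E] [CharP E p] [Algebra (ZMod p) E]
    (hF : Fintype.card F = q) (hE : Fintype.card E = q ^ n)
    (c : F) (hc : ¬ IsSquare c)
    (χ : MulChar E ℂ) (hχ : χ ≠ 1)
    (X₁ Xc : ℂ)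
    (hX₁ : X₁ = ∑ ξ : Eˣ, χ (ξ : E) * canonAddChar p E ((ξ : E) ^ 2))
    (hXc : Xc = ∑ ξ : Eˣ, χ (ξ : E) * canonAddChar p E (algebraMap F E c * (ξ : E) ^ 2)) :
    ‖X₁‖ + ‖Xc‖ ≤ 2 * Real.sqrt 2 * Real.sqrt ((q : ℝ) ^ n) := by
  have hfinrank : Module.finrank F E = n :=
    Nat.pow_right_injective (hF ▸ Fintype.one_lt_card)
      (by dsimp only; rw [← hE, Module.card_eq_pow_finrank (K := F), hF])
  have hchar : ringChar E ≠ 2 := by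
    rw [Ne, FiniteField.even_card_iff_char_two, hE, Nat.pow_mod, show q % 2 = 1 by omega, one_pow]
    decide
  have hc' := not_isSquare_algebraMap_of_odd_finrank (hfinrank ▸ hnodd) hc
  have hX : ∀ b : E, ∑ ξ : Eˣ, χ ξ * canonAddChar p E (b * ξ ^ 2) =
      quadGaussSum (traceAddChar p E) χ b := fun b => by
    rw [Fintype.sum_units_eq_sum_of_map_zero (f := fun x => χ x * canonAddChar p E (b * x ^ 2))
      (by rw [MulChar.map_zero, zero_mul])]
    simp only [quadGaussSum, traceAddChar_apply]
  have hX1 := hX 1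
  simp only [one_mul] at hX1
  rw [hX₁, hXc, hX1, hX, ← Nat.cast_pow, ← hE]
  exact norm_quadGaussSum_add_norm_le hchar (isPrimitive_traceAddChar p E) hχ hc'

/-- Let `q ≡ 1 (mod 4)` be a prime power and `n` odd and positive. Let `χ`
be a nontrivial multiplicative character of `F_{q^n}` and `c ∈ F_q^*` a nonsquare of `F_q`.
Then `|X₁(χ)| + |X_c(χ)| ≤ 2√2 · q^{n/2}`, where `X_b(χ) = Σ_{ξ ∈ F_{q^n}^*} χ(ξ)ψ(bξ²)`
and `ψ` is the canonical additive character of `F_{q^n}`. -/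
theorem abs_X_one_add_abs_X_c_le (p a q n : ℕ) [Fact p.Prime] (ha : 0 < a) (hq : q = p ^ a)
    (hq4 : q % 4 = 1) (hn : 0 < n) (hnodd : Odd n)
    (F E : Type*) [Field F] [Fintype F] [Field E] [Fintype E] [DecidableEq E]
    [Algebra F E] [CharP E p] [Algebra (ZMod p) E]
    (hF : Fintype.card F = q) (hE : Fintype.card E = q ^ n)
    (c : F) (hc0 : c ≠ 0) (hc : ¬ IsSquare c)
    (χ : MulChar E ℂ) (hχ : χ ≠ 1)
    (X₁ Xc : ℂ)
    (hX₁ : X₁ = ∑ ξ : Eˣ, χ (ξ : E) * canonAddChar p E ((ξ : E) ^ 2))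
    (hXc : Xc = ∑ ξ : Eˣ, χ (ξ : E) * canonAddChar p E (algebraMap F E c * (ξ : E) ^ 2)) :
    ‖X₁‖ + ‖Xc‖ ≤ 2 * Real.sqrt 2 * Real.sqrt ((q : ℝ) ^ n) :=
  abs_X_one_add_abs_X_c_le_general p q n hq4 hnodd F E hF hE c hc χ hχ X₁ Xc hX₁ hXc
end
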